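/- No nonempty open subset of a complete metric linear space is shy. -/

import Mathlib

/-! A compact set is covered by finitely many translates of any set with nonempty interior, so a
measure that annihilates every translate of such a set annihilates every compact set, and hence
cannot be a probability measure concentrated on a compact set. -/

open MeasureTheory

/-- A Borel set `S` is *shy* if there is a compactly supported Borel probability
measure `μ` such that every translate of `S` has `μ`-measure zero. -/
def IsShyBorel {X : Type*} [AddGroup X] [TopologicalSpace X] [MeasurableSpace X]
    (S : Set X) : Prop :=
  MeasurableSet S ∧ ∃ μ : Measure X, IsProbabilityMeasure μ ∧
    (∃ K : Set X, IsCompact K ∧ μ Kᶜ = 0) ∧ ∀ x : X, μ ((· + x) '' S) = 0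

/-- A set is *shy* if it is contained in a shy Borel set. -/
def IsShy {X : Type*} [AddGroup X] [TopologicalSpace X] [MeasurableSpace X]
    (S : Set X) : Prop :=
  ∃ T, S ⊆ T ∧ IsShyBorel T

/-- A set is *prevalent* if its complement is shy. -/
def Prevalent {X : Type*} [AddGroup X] [TopologicalSpace X] [MeasurableSpace X]
    (S : Set X) : Prop :=
  IsShy Sᶜ

open Set

section TranslateCover

variable {G : Type*} [AddGroup G] [TopologicalSpace G] [IsTopologicalAddGroup G]

theorem IsCompact.exists_finite_cover_add_right_translates {K V : Set G} (hK : IsCompact K)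
    (hV : (interior V).Nonempty) : ∃ t : Finset G, K ⊆ ⋃ g ∈ t, (· + g) '' V := by
  obtain ⟨v, hv⟩ := hV
  obtain ⟨t, ht⟩ := hK.elim_finite_subcover (fun g : G => (· + g) '' interior V)
    (fun g => (Homeomorph.addRight g).isOpenMap _ isOpen_interior)
    (fun k _ => mem_iUnion.2 ⟨-v + k, v, hv, add_neg_cancel_left v k⟩)
  exact ⟨t, ht.trans <| iUnion₂_mono fun g _ => image_mono interior_subset⟩

variable [MeasurableSpace G]

theorem IsCompact.measure_eq_zero_of_forall_translate_null {μ : Measure G} {K S : Set G}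
    (hK : IsCompact K) (hS : (interior S).Nonempty) (hnull : ∀ x, μ ((· + x) '' S) = 0) :
    μ K = 0 := by
  obtain ⟨t, ht⟩ := hK.exists_finite_cover_add_right_translates hS
  exact measure_mono_null ht ((measure_biUnion_null_iff t.countable_toSet).2 fun g _ => hnull g)

theorem IsShyBorel.interior_eq_empty {S : Set G} (hS : IsShyBorel S) : interior S = ∅ := by
  obtain ⟨-, μ, hμ, ⟨K, hK, hKc⟩, hnull⟩ := hS
  by_contra hne
  have hK0 := hK.measure_eq_zero_of_forall_translate_null (nonempty_iff_ne_empty.2 hne) hnull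
  have huniv := measure_union_null hK0 hKc
  rw [union_compl_self, measure_univ] at huniv
  exact one_ne_zero huniv

theorem IsShy.interior_eq_empty {S : Set G} (hS : IsShy S) : interior S = ∅ := by
  obtain ⟨T, hST, hT⟩ := hS
  exact subset_eq_empty (interior_mono hST) hT.interior_eq_empty

end TranslateCover

theorem open_not_shy_general {X : Type*} [AddCommGroup X] [MetricSpace X]
    [IsTopologicalAddGroup X] [MeasurableSpace X]
    (U : Set X) (hU : IsOpen U) (hne : U.Nonempty) : ¬ IsShy U := fun hshy =>
  hne.ne_empty (hU.interior_eq ▸ hshy.interior_eq_empty)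

theorem open_not_shy {X : Type*} [AddCommGroup X] [Module ℝ X] [MetricSpace X] [CompleteSpace X]
    [IsTopologicalAddGroup X] [ContinuousSMul ℝ X] [MeasurableSpace X] [BorelSpace X]
    (U : Set X) (hU : IsOpen U) (hne : U.Nonempty) : ¬ IsShy U :=
  open_not_shy_general U hU hne
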